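/- Let ψ: ℝ³ → ℝ be a continuous helix with pitch P ≠ 0 (integrable enough that projections exist), and let t₀, t ∈ ℝ with θ = (2π/P)(t - t₀). Then the projection of the segment at position t equals the rotated projection of the segment at t₀: for all (x,y), ∫ ψ((x,y,z)ᵀ - t x̂) dz = ∫ ψ(R_x(θ)(x,y,z)ᵀ - t₀ x̂) dz. -/

import Mathlib

open Matrix MeasureTheory Real

noncomputable def Rx (θ : ℝ) : Matrix (Fin 3) (Fin 3) ℝ :=
  !![1, 0, 0; 0, Real.cos θ, -Real.sin θ; 0, Real.sin θ, Real.cos θ]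

def xhat : Fin 3 → ℝ := ![1, 0, 0]

theorem Rx_mulVec_xhat (θ : ℝ) : (Rx θ).mulVec xhat = xhat := by
  ext i
  fin_cases i <;> simp [Rx, xhat, mulVec, dotProduct, Fin.sum_univ_three]

/-- Screw the point `r - t x̂` by the helix symmetry with shift `s = t - t₀`; since `R_x` fixes
`x̂`, the translation parts combine to `-t₀ x̂`. -/
theorem helix_apply_sub_smul_xhat {ψ : (Fin 3 → ℝ) → ℝ} {P : ℝ}
    (hhelix : ∀ (r : Fin 3 → ℝ) (s : ℝ),
      ψ r = ψ ((Rx (2 * π * s / P)).mulVec r + s • xhat))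
    (r : Fin 3 → ℝ) (t₀ t : ℝ) :
    ψ (r - t • xhat) = ψ ((Rx (2 * π / P * (t - t₀))).mulVec r - t₀ • xhat) := by
  rw [hhelix (r - t • xhat) (t - t₀), mul_div_right_comm, mulVec_sub, mulVec_smul,
    Rx_mulVec_xhat]
  congr 1
  module

theorem stmt4_general (ψ : (Fin 3 → ℝ) → ℝ) (P : ℝ)
    (hhelix : ∀ (r : Fin 3 → ℝ) (s : ℝ),
      ψ r = ψ ((Rx (2 * π * s / P)).mulVec r + s • xhat))
    (t₀ t : ℝ) (θ : ℝ) (hθ : θ = 2 * π / P * (t - t₀)) :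
    ∀ x y : ℝ,
      (∫ z : ℝ, ψ (![x, y, z] - t • xhat)) =
        ∫ z : ℝ, ψ ((Rx θ).mulVec ![x, y, z] - t₀ • xhat) := by
  intro x y
  subst hθ
  exact integral_congr_ae (.of_forall fun z => helix_apply_sub_smul_xhat hhelix _ t₀ t)

theorem stmt4 (ψ : (Fin 3 → ℝ) → ℝ) (P : ℝ) (hP : P ≠ 0)
    (hhelix : ∀ (r : Fin 3 → ℝ) (s : ℝ),
      ψ r = ψ ((Rx (2 * π * s / P)).mulVec r + s • xhat))
    (hint : ∀ (x y : ℝ) (t : ℝ), Integrable (fun z : ℝ => ψ (![x, y, z] - t • xhat)))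
    (t₀ t : ℝ) (θ : ℝ) (hθ : θ = 2 * π / P * (t - t₀)) :
    ∀ x y : ℝ,
      (∫ z : ℝ, ψ (![x, y, z] - t • xhat)) =
        ∫ z : ℝ, ψ ((Rx θ).mulVec ![x, y, z] - t₀ • xhat) :=
  stmt4_general ψ P hhelix t₀ t θ hθ
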